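/- (Proposition 1) The 𝔭-brackets of generalized positions Q^ζ and generalized momenta P_ξ are: (i) {Q^ζ, Q^ζ̃} = 0 for all (n−1)-forms ζ, ζ̃ on X×Y; (ii) {P_ξ, P_ξ̃} = P_{[ξ,ξ̃]} + d( ξ̃⌟ξ⌟θ ) for all vector fields ξ, ξ̃ on X×Y, where [ξ,ξ̃] is their Lie bracket; (iii) {P_ξ, Q^ζ} = Σ_{μ1<…<μn} Σ_α Σ_μ (−1)^{α+1} ξ^μ (∂ζ_{μ1…μ_{α−1}μ_{α+1}…μn}/∂q^{μ_α}) (∂/∂q^μ)⌟(dq^{μ1}∧…∧dq^{μn}). -/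

import Mathlib

open scoped BigOperators
open MeasureTheory

noncomputable section

namespace Pataplectic

/-- A multi-index `μ : Fin d → Fin e` is increasing. -/
def IncP {d e : ℕ} (μ : Fin d → Fin e) : Prop := ∀ a b : Fin d, a < b → μ a < μ b

instance {d e : ℕ} : DecidablePred (@IncP d e) := fun μ => by unfold IncP; infer_instance

variable (n k : ℕ)

/-- Coordinates on `X × Y`, where `X = ℝⁿ` and `Y = ℝᵏ`. -/
abbrev E := Fin (n + k) → ℝ

/-- Increasing multi-indices of length `n`, indexing the coordinates
`p_{μ₁…μₙ}` of a point of `ΛⁿT*(X×Y)` over a point of `X×Y`. -/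
abbrev Idx := {μ : Fin n → Fin (n + k) // IncP μ}

/-- The fiber of `ΛⁿT*(X×Y)`, described by its coordinates `p_{μ₁…μₙ}`. -/
abbrev Psp := Idx n k → ℝ

/-- The pataplectic manifold `M = ΛⁿT*(X×Y)`. -/
abbrev Mfd := E n k × Psp n k

/-- Evaluation `⟨p, z₁ ∧ … ∧ zₙ⟩` of `p ∈ ΛⁿT*_q(X×Y)` on an `n`-tuple of
tangent vectors: `Σ_{μ₁<…<μₙ} p_{μ₁…μₙ} det (z_b^{μ_a})`. -/
def pApply (p : Psp n k) (z : Fin n → E n k) : ℝ :=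
  ∑ μ : Idx n k, p μ * Matrix.det (Matrix.of fun a b => z b (μ.1 a))

/-- A (raw) differential `d`-form on `M`, given by its evaluation on `d`-tuples
of tangent vectors. -/
abbrev Form (d : ℕ) := Mfd n k → (Fin d → Mfd n k) → ℝ

variable {n k}

/-- The exterior derivative of a `d`-form on `M`, via the standard formula
on constant vector fields. -/
def extD {d : ℕ} (ω : Form n k d) : Form n k (d + 1) :=
  fun x v => ∑ i : Fin (d + 1),
    (-1 : ℝ) ^ (i : ℕ) * fderiv ℝ (fun y => ω y (i.removeNth v)) x (v i)

/-- Interior product of a vector field with a `(d+1)`-form. -/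
def iota {d : ℕ} (ξ : Mfd n k → Mfd n k) (ω : Form n k (d + 1)) : Form n k d :=
  fun x v => ω x (Fin.cons (ξ x) v)

/-- A raw form is smooth if its evaluation on any fixed tuple of (constant)
tangent vectors is a smooth function on `M`. -/
def SmoothF {d : ℕ} (ω : Form n k d) : Prop := ∀ v, ContDiff ℝ (⊤ : ℕ∞) (fun x => ω x v)

variable (n k)

/-- The Poincaré–Cartan form `θ = Σ_{μ₁<…<μₙ} p_{μ₁…μₙ} dq^{μ₁}∧…∧dq^{μₙ}`. -/
def theta : Form n k n := fun m v => pApply n k m.2 (fun i => (v i).1)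

/-- The pataplectic form `Ω = dθ`. -/
def Omega : Form n k (n + 1) := extD (theta n k)

/-- The volume form `ω = dx¹∧…∧dxⁿ`, pulled back to `M`. -/
def vol : Form n k n := fun _ v => Matrix.det (Matrix.of fun a b => (v b).1 (Fin.castAdd k a))

/-- Lie bracket of two vector fields on `M`. -/
def lieB {n k : ℕ} (ξ η : Mfd n k → Mfd n k) : Mfd n k → Mfd n k :=
  fun x => fderiv ℝ η x (ξ x) - fderiv ℝ ξ x (η x)


/- Throughout, the dimension of `X` is `n + 2`, so that "(n-1)-forms" on
`M = Λ^{n+2}T*(X×Y)` have degree `n+1` and their 𝔭-brackets can be differentiated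
and doubly contracted without leaving natural degrees. -/
variable (n k : ℕ)

/-- Increasing multi-indices of length `n+1`: the indices of a generalized
position form `Q^ζ`. -/
abbrev IdxQ := {ρ : Fin (n + 1) → Fin (n + 2 + k) // IncP ρ}

/-- A generalized position form `Q^ζ = Σ ζ_{μ₁…}(q) dq^{μ₁}∧…`. -/
def Qform (ζ : IdxQ n k → E (n + 2) k → ℝ) : Form (n + 2) k (n + 1) :=
  fun m v => ∑ ρ : IdxQ n k,
    ζ ρ m.1 * Matrix.det (Matrix.of fun a b => (v b).1 (ρ.1 a))

/-- Removing the `α`-th entry of an increasing multi-index. -/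
def removeIdx (μ : Idx (n + 2) k) (α : Fin (n + 2)) : IdxQ n k :=
  ⟨Fin.removeNth α μ.1, fun a b h => μ.2 _ _ (Fin.strictMono_succAbove α h)⟩

/-- The pataplectic vector field `Ξ(Q^ζ)`. -/
def XiQ (ζ : IdxQ n k → E (n + 2) k → ℝ) : Mfd (n + 2) k → Mfd (n + 2) k :=
  fun m => (0, fun μ : Idx (n + 2) k =>
    ∑ α : Fin (n + 2), (-1 : ℝ) ^ ((α : ℕ) + 1) *
      fderiv ℝ (ζ (removeIdx n k μ α)) m.1 (Pi.single (μ.1 α) 1))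

/-- The coordinate `p_σ` for an arbitrary multi-index `σ`. -/
def pcoord (p : Psp (n + 2) k) (σ : Fin (n + 2) → Fin (n + 2 + k)) : ℝ :=
  pApply (n + 2) k p (fun a => Pi.single (σ a) 1)

/-- The vector field `Π^ν_μ`. -/
def Pi2 (ν₀ μ₀ : Fin (n + 2 + k)) : Mfd (n + 2) k → Mfd (n + 2) k :=
  fun m => (0, fun ρ : Idx (n + 2) k =>
    ∑ α : Fin (n + 2),
      if ρ.1 α = ν₀ then pcoord n k m.2 (Function.update ρ.1 α μ₀) else 0)

/-- The generalized momentum form `P_ξ = ξ ⌟ θ`. -/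
def Pform (ξ : E (n + 2) k → E (n + 2) k) : Form (n + 2) k (n + 1) :=
  iota (fun m => (ξ m.1, 0)) (theta (n + 2) k)

/-- The pataplectic vector field `Ξ(P_ξ) = ξ − Σ_{μ,ν} (∂ξ^μ/∂q^ν) Π^ν_μ`. -/
def XiP (ξ : E (n + 2) k → E (n + 2) k) : Mfd (n + 2) k → Mfd (n + 2) k :=
  fun m => ((ξ m.1, 0) : Mfd (n + 2) k)
    - ∑ μ₀ : Fin (n + 2 + k), ∑ ν₀ : Fin (n + 2 + k),
        fderiv ℝ (fun q => ξ q μ₀) m.1 (Pi.single ν₀ 1) • Pi2 n k ν₀ μ₀ m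

/-- Lie bracket of vector fields on `X×Y`. -/
def lieBE (ξ ξ' : E (n + 2) k → E (n + 2) k) : E (n + 2) k → E (n + 2) k :=
  fun q => fderiv ℝ ξ' q (ξ q) - fderiv ℝ ξ q (ξ' q)

section Aux

variable {d e : ℕ}

lemma IncP.strictMono {μ : Fin d → Fin e} (h : IncP μ) : StrictMono μ :=
  fun _ _ hab => h _ _ hab

def pApplyLM (z : Fin d → E d e) : Psp d e →ₗ[ℝ] ℝ where
  toFun p := pApply d e p z
  map_add' p q := by simp [pApply, add_mul, Finset.sum_add_distrib]
  map_smul' c p := by simp [pApply, Finset.mul_sum, mul_assoc]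

def pApplyCLM (z : Fin d → E d e) : Psp d e →L[ℝ] ℝ :=
  LinearMap.toContinuousLinearMap (pApplyLM z)

lemma pApplyCLM_apply (z : Fin d → E d e) (p : Psp d e) :
    pApplyCLM z p = pApply d e p z := rfl

lemma hasFDerivAt_pApply_snd (z : Fin d → E d e) (x : Mfd d e) :
    HasFDerivAt (fun y : Mfd d e => pApply d e y.2 z)
      ((pApplyCLM z).comp (ContinuousLinearMap.snd ℝ (E d e) (Psp d e))) x :=
  ((pApplyCLM z).comp (ContinuousLinearMap.snd ℝ (E d e) (Psp d e))).hasFDerivAt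

lemma Omega_eval (x : Mfd d e) (w : Fin (d + 1) → Mfd d e) :
    Omega d e x w = ∑ i : Fin (d + 1),
      (-1 : ℝ) ^ (i : ℕ) * pApply d e (w i).2 (fun j => (i.removeNth w j).1) := by
  unfold Omega extD theta
  refine Finset.sum_congr rfl fun i _ => ?_
  congr 1
  rw [(hasFDerivAt_pApply_snd (fun j => (i.removeNth w j).1) x).fderiv]
  rfl

lemma pApply_zero_col (p : Psp d e) (z : Fin d → E d e) (b : Fin d) (h : z b = 0) :
    pApply d e p z = 0 := by
  unfold pApply
  refine Finset.sum_eq_zero fun μ _ => ?_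
  rw [Matrix.det_eq_zero_of_column_eq_zero b (fun a => by simp [h]), mul_zero]

end Aux
section Aux2

variable {d e : ℕ}

/-- The coordinate `p_σ` for an arbitrary multi-index, general dimensions. -/
def pc (p : Psp d e) (σ : Fin d → Fin (d + e)) : ℝ :=
  pApply d e p fun a => Pi.single (σ a) 1

lemma det_expand (μ : Fin d → Fin (d + e)) (z : Fin d → E d e) :
    Matrix.det (Matrix.of fun a b => z b (μ a))
      = ∑ σ : Fin d → Fin (d + e),
          Matrix.det (Matrix.of fun a b => (Pi.single (σ b) 1 : E d e) (μ a)) * ∏ b, z b (σ b) := by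
  have h1 : Matrix.det (Matrix.of fun a b => z b (μ a))
      = Matrix.detRowAlternating (Matrix.of fun b a => z b (μ a)) := by
    rw [← Matrix.det_transpose]; rfl
  have h2 : (Matrix.of fun b a => z b (μ a))
      = fun b => ∑ t : Fin (d + e), z b t • (fun a => (Pi.single t 1 : E d e) (μ a)) := by
    funext b a
    simp [Finset.sum_apply, Pi.single_apply]
  rw [h1, h2]
  show (Matrix.detRowAlternating (n := Fin d) (R := ℝ)).toMultilinearMap
      (fun b => ∑ t : Fin (d + e), z b t • (fun a => (Pi.single t 1 : E d e) (μ a))) = _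
  rw [(Matrix.detRowAlternating (n := Fin d) (R := ℝ)).toMultilinearMap.map_sum
      (fun b t => z b t • (fun a => (Pi.single t 1 : E d e) (μ a)))]
  refine Finset.sum_congr rfl fun σ _ => ?_
  rw [MultilinearMap.map_smul_univ, mul_comm]
  congr 1
  have h3 : (Matrix.detRowAlternating.toMultilinearMap
        (fun b => (fun a => (Pi.single (σ b) 1 : E d e) (μ a))))
      = Matrix.det (Matrix.of fun b a => (Pi.single (σ b) 1 : E d e) (μ a)) := rfl
  rw [h3, ← Matrix.det_transpose]
  rfl

lemma pApply_expand (p : Psp d e) (z : Fin d → E d e) :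
    pApply d e p z = ∑ σ : Fin d → Fin (d + e), pc p σ * ∏ b, z b (σ b) := by
  unfold pc pApply
  calc ∑ μ : Idx d e, p μ * Matrix.det (Matrix.of fun a b => z b (μ.1 a))
      = ∑ μ : Idx d e, ∑ σ : Fin d → Fin (d + e),
          p μ * (Matrix.det (Matrix.of fun a b => (Pi.single (σ b) 1 : E d e) (μ.1 a)) * ∏ b, z b (σ b)) := by
        refine Finset.sum_congr rfl fun μ _ => ?_
        rw [det_expand μ.1 z, Finset.mul_sum]
    _ = ∑ σ : Fin d → Fin (d + e), ∑ μ : Idx d e,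
          p μ * (Matrix.det (Matrix.of fun a b => (Pi.single (σ b) 1 : E d e) (μ.1 a)) * ∏ b, z b (σ b)) :=
        Finset.sum_comm
    _ = _ := by
        refine Finset.sum_congr rfl fun σ _ => ?_
        rw [Finset.sum_mul]
        exact Finset.sum_congr rfl fun μ _ => by ring

lemma pApply_comp_perm (p : Psp d e) (z : Fin d → E d e) (π : Equiv.Perm (Fin d)) :
    pApply d e p (z ∘ π) = ((Equiv.Perm.sign π : ℤ) : ℝ) * pApply d e p z := by
  unfold pApply
  rw [Finset.mul_sum]
  refine Finset.sum_congr rfl fun μ _ => ?_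
  have h : (Matrix.of fun a b => (z ∘ π) b (μ.1 a))
      = (Matrix.of fun a b => z b (μ.1 a)).submatrix id π := rfl
  rw [h, Matrix.det_permute']
  push_cast
  ring

lemma pc_comp_perm (p : Psp d e) (σ : Fin d → Fin (d + e)) (π : Equiv.Perm (Fin d)) :
    pc p (σ ∘ π) = ((Equiv.Perm.sign π : ℤ) : ℝ) * pc p σ := by
  unfold pc
  rw [show (fun a => (Pi.single ((σ ∘ π) a) 1 : E d e)) = (fun a => (Pi.single (σ a) 1 : E d e)) ∘ π from rfl]
  exact pApply_comp_perm p _ π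

lemma pc_eq_zero (p : Psp d e) (σ : Fin d → Fin (d + e)) {b₁ b₂ : Fin d}
    (hne : b₁ ≠ b₂) (h : σ b₁ = σ b₂) : pc p σ = 0 := by
  unfold pc pApply
  refine Finset.sum_eq_zero fun μ _ => ?_
  have hd : Matrix.det (Matrix.of fun a b => (Pi.single (σ b) 1 : E d e) (μ.1 a)) = 0 := by
    rw [← Matrix.det_transpose]
    exact Matrix.detRowAlternating.map_eq_zero_of_eq _
      (by funext a; show (Pi.single (σ b₁) 1 : E d e) (μ.1 a) = (Pi.single (σ b₂) 1 : E d e) (μ.1 a); rw [h]) hne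
  rw [hd, mul_zero]

lemma incP_eq_of_range {μ ν : Idx d e} (h : Set.range μ.1 = Set.range ν.1) : μ = ν := by
  have hws : WellFoundedLT (Fin d) := inferInstance
  have h2 : μ.1 = ν.1 := (StrictMono.range_inj μ.2.strictMono ν.2.strictMono).mp h
  exact Subtype.ext h2

lemma pc_idx (p : Psp d e) (ρ : Idx d e) : pc p ρ.1 = p ρ := by
  unfold pc pApply
  rw [Finset.sum_eq_single ρ]
  · have h : (Matrix.of fun a b => (Pi.single (ρ.1 b) 1 : E d e) (ρ.1 a)) = (1 : Matrix (Fin d) (Fin d) ℝ) := by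
      ext a b
      by_cases hab : a = b
      · simp [hab, Pi.single_apply, Matrix.one_apply]
      · have h2 : ρ.1 a ≠ ρ.1 b := fun hc => hab (ρ.2.strictMono.injective hc)
        simp [Pi.single_apply, h2, Matrix.one_apply, hab]
    rw [h, Matrix.det_one, mul_one]
  · intro μ _ hμ
    have hex : ∃ b, ρ.1 b ∉ Set.range μ.1 := by
      by_contra hc
      push_neg at hc
      have hsub : (Finset.univ.image ρ.1) ⊆ (Finset.univ.image μ.1) := by
        intro t ht
        simp only [Finset.mem_image] at ht ⊢
        obtain ⟨b, _, rfl⟩ := ht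
        obtain ⟨a, ha⟩ := hc b
        exact ⟨a, Finset.mem_univ a, ha⟩
      have hcard : (Finset.univ.image μ.1).card ≤ (Finset.univ.image ρ.1).card := by
        rw [Finset.card_image_of_injective _ μ.2.strictMono.injective,
          Finset.card_image_of_injective _ ρ.2.strictMono.injective]
      have heq := Finset.eq_of_subset_of_card_le hsub hcard
      have hrange : Set.range μ.1 = Set.range ρ.1 := by
        rw [← Set.image_univ, ← Set.image_univ, ← Finset.coe_univ, ← Finset.coe_image,
          ← Finset.coe_image, heq]
      exact hμ (incP_eq_of_range hrange)
    obtain ⟨b, hb⟩ := hex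
    have hd : Matrix.det (Matrix.of fun a b' => (Pi.single (ρ.1 b') 1 : E d e) (μ.1 a)) = 0 := by
      refine Matrix.det_eq_zero_of_column_eq_zero b fun a => ?_
      have h2 : μ.1 a ≠ ρ.1 b := fun hc => hb ⟨a, hc⟩
      simp [Pi.single_apply, h2]
    rw [hd, mul_zero]
  · simp

lemma pc_alt (G : (Fin d → Fin (d + e)) → ℝ)
    (hG0 : ∀ σ, ¬ Function.Injective σ → G σ = 0)
    (hGp : ∀ σ (π : Equiv.Perm (Fin d)), G (σ ∘ π) = ((Equiv.Perm.sign π : ℤ) : ℝ) * G σ)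
    (σ : Fin d → Fin (d + e)) :
    pc (fun ρ : Idx d e => G ρ.1) σ = G σ := by
  by_cases hinj : Function.Injective σ
  · set π := Tuple.sort σ with hπ
    have hmono : Monotone (σ ∘ π) := Tuple.monotone_sort σ
    have hsm : StrictMono (σ ∘ π) := hmono.strictMono_of_injective (hinj.comp π.injective)
    have hinc : IncP (σ ∘ π) := fun a b h => hsm h
    have hσ : σ = (σ ∘ π) ∘ π.symm := by
      funext a; simp
    rw [hσ, pc_comp_perm, hGp]
    congr 1
    exact pc_idx _ ⟨σ ∘ π, hinc⟩
  · rw [hG0 σ hinj]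
    rw [Function.not_injective_iff] at hinj
    obtain ⟨b₁, b₂, heq, hne⟩ := hinj
    exact pc_eq_zero _ σ hne heq

end Aux2
section Aux3

variable {d e : ℕ}

lemma of_update (z : Fin d → E d e) (b : Fin d) (u : E d e) (μ : Fin d → Fin (d + e)) :
    (Matrix.of fun a b' => Function.update z b u b' (μ a))
      = (Matrix.of fun a b' => z b' (μ a)).updateCol b (fun a => u (μ a)) := by
  ext a b'
  simp only [Matrix.of_apply, Matrix.updateCol_apply, Function.update_apply]
  split <;> rfl

lemma pApply_update_add (p : Psp d e) (z : Fin d → E d e) (b : Fin d) (u v : E d e) :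
    pApply d e p (Function.update z b (u + v))
      = pApply d e p (Function.update z b u) + pApply d e p (Function.update z b v) := by
  unfold pApply
  rw [← Finset.sum_add_distrib]
  refine Finset.sum_congr rfl fun μ _ => ?_
  rw [of_update, of_update, of_update]
  rw [show (fun a => (u + v) (μ.1 a)) = (fun a => u (μ.1 a)) + (fun a => v (μ.1 a)) from rfl]
  rw [Matrix.det_updateCol_add]
  ring

lemma pApply_update_smul (p : Psp d e) (z : Fin d → E d e) (b : Fin d) (c : ℝ) (u : E d e) :
    pApply d e p (Function.update z b (c • u)) = c * pApply d e p (Function.update z b u) := by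
  unfold pApply
  rw [Finset.mul_sum]
  refine Finset.sum_congr rfl fun μ _ => ?_
  rw [of_update, of_update]
  rw [show (fun a => (c • u) (μ.1 a)) = c • (fun a => u (μ.1 a)) from rfl]
  rw [Matrix.det_updateCol_smul]
  ring

lemma pApply_update_sum {ι : Type*} (s : Finset ι) (p : Psp d e) (z : Fin d → E d e) (b : Fin d)
    (u : ι → E d e) :
    pApply d e p (Function.update z b (∑ i ∈ s, u i))
      = ∑ i ∈ s, pApply d e p (Function.update z b (u i)) := by
  classical
  induction s using Finset.induction_on with
  | empty =>
      simp only [Finset.sum_empty]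
      exact pApply_zero_col p _ b (Function.update_self b 0 z)
  | insert _ _ hnotmem ih =>
      rw [Finset.sum_insert hnotmem, pApply_update_add, ih, Finset.sum_insert hnotmem]

/-- Reconstituting a column from coordinates. -/
lemma pApply_update_vec (p : Psp d e) (z : Fin d → E d e) (b : Fin d) (u : E d e) :
    pApply d e p (Function.update z b u)
      = ∑ t : Fin (d + e), u t * pApply d e p (Function.update z b (Pi.single t 1)) := by
  have h : u = ∑ t : Fin (d + e), u t • (Pi.single t 1 : E d e) := by
    conv_lhs => rw [← Finset.univ_sum_single u]
    refine Finset.sum_congr rfl fun t _ => ?_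
    ext s
    simp [Pi.single_apply]
  conv_lhs => rw [h]
  rw [pApply_update_sum]
  exact Finset.sum_congr rfl fun t _ => pApply_update_smul p z b (u t) _

end Aux3
section Aux4

variable {n k : ℕ}

lemma update_swap {α β : Type*} [DecidableEq α] (σ : α → β) {b₁ b₂ : α}
    (hne : b₁ ≠ b₂) (h : σ b₁ = σ b₂) (v : β) :
    Function.update σ b₂ v = (Function.update σ b₁ v) ∘ (Equiv.swap b₁ b₂) := by
  funext c
  rcases eq_or_ne c b₁ with rfl | hc1
  · rw [Function.comp_apply, Equiv.swap_apply_left, Function.update_of_ne hne,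
      Function.update_of_ne (Ne.symm hne)]
    exact h
  · rcases eq_or_ne c b₂ with rfl | hc2
    · have hs : (Equiv.swap b₁ c) c = b₁ := Equiv.swap_apply_right b₁ c
      rw [Function.comp_apply, hs, Function.update_self, Function.update_self]
    · have hs : (Equiv.swap b₁ b₂) c = c := Equiv.swap_apply_of_ne_of_ne hc1 hc2
      rw [Function.comp_apply, hs, Function.update_of_ne hc2, Function.update_of_ne hc1]

lemma pc_Pi2 (ν₀ μ₀ : Fin (n + 2 + k)) (m : Mfd (n + 2) k)
    (σ : Fin (n + 2) → Fin (n + 2 + k)) :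
    pc (Pi2 n k ν₀ μ₀ m).2 σ
      = ∑ b : Fin (n + 2), if σ b = ν₀ then pc m.2 (Function.update σ b μ₀) else 0 := by
  have hG0 : ∀ σ : Fin (n + 2) → Fin (n + 2 + k), ¬ Function.Injective σ →
      (∑ b : Fin (n + 2), if σ b = ν₀ then pc m.2 (Function.update σ b μ₀) else 0) = 0 := by
    intro σ hσ
    rw [Function.not_injective_iff] at hσ
    obtain ⟨b₁, b₂, heq, hne⟩ := hσ
    by_cases hv : σ b₁ = ν₀
    · have hv₂ : σ b₂ = ν₀ := by rw [← heq]; exact hv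
      have key : ∀ b : Fin (n + 2), (if σ b = ν₀ then pc m.2 (Function.update σ b μ₀) else 0)
          = (if b = b₁ then pc m.2 (Function.update σ b₁ μ₀) else 0)
            + (if b = b₂ then -pc m.2 (Function.update σ b₁ μ₀) else 0) := by
        intro b
        rcases eq_or_ne b b₁ with rfl | h1
        · rw [if_pos hv, if_pos rfl, if_neg hne, add_zero]
        · rcases eq_or_ne b b₂ with rfl | h2
          · rw [if_pos hv₂, if_neg h1, if_pos rfl, zero_add]
            rw [update_swap σ (fun h : b₁ = b => h1 h.symm) heq μ₀, pc_comp_perm,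
              Equiv.Perm.sign_swap (fun h : b₁ = b => h1 h.symm)]
            push_cast
            ring
          · by_cases h : σ b = ν₀
            · rw [if_pos h, if_neg h1, if_neg h2, add_zero]
              refine pc_eq_zero m.2 _ hne ?_
              rw [Function.update_apply, Function.update_apply,
                if_neg (fun h' : b₁ = b => h1 h'.symm), if_neg (fun h' : b₂ = b => h2 h'.symm)]
              exact heq
            · rw [if_neg h, if_neg h1, if_neg h2, add_zero]
      rw [Finset.sum_congr rfl fun b _ => key b, Finset.sum_add_distrib,
        Finset.sum_ite_eq' Finset.univ b₁ (fun _ => pc m.2 (Function.update σ b₁ μ₀)),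
        Finset.sum_ite_eq' Finset.univ b₂ (fun _ => -pc m.2 (Function.update σ b₁ μ₀))]
      simp
    · have hv₂ : σ b₂ ≠ ν₀ := by rw [← heq]; exact hv
      refine Finset.sum_eq_zero fun b _ => ?_
      by_cases h : σ b = ν₀
      · have hb1 : b₁ ≠ b := fun h' => hv (by rw [h']; exact h)
        have hb2 : b₂ ≠ b := fun h' => hv₂ (by rw [h']; exact h)
        rw [if_pos h]
        refine pc_eq_zero m.2 _ hne ?_
        rw [Function.update_apply, Function.update_apply, if_neg hb1, if_neg hb2]
        exact heq
      · rw [if_neg h]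
  have hGp : ∀ (σ : Fin (n + 2) → Fin (n + 2 + k)) (π : Equiv.Perm (Fin (n + 2))),
      (∑ b : Fin (n + 2), if (σ ∘ π) b = ν₀ then pc m.2 (Function.update (σ ∘ π) b μ₀) else 0)
        = ((Equiv.Perm.sign π : ℤ) : ℝ)
          * ∑ b : Fin (n + 2), if σ b = ν₀ then pc m.2 (Function.update σ b μ₀) else 0 := by
    intro σ π
    rw [Finset.mul_sum]
    rw [← Equiv.sum_comp π (fun b => ((Equiv.Perm.sign π : ℤ) : ℝ)
      * if σ b = ν₀ then pc m.2 (Function.update σ b μ₀) else 0)]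
    refine Finset.sum_congr rfl fun b _ => ?_
    have hup : Function.update (σ ∘ π) b μ₀ = (Function.update σ (π b) μ₀) ∘ π := by
      funext c
      simp only [Function.comp_apply, Function.update_apply, EmbeddingLike.apply_eq_iff_eq]
    by_cases h : σ (π b) = ν₀
    · rw [if_pos (show (σ ∘ π) b = ν₀ from h), hup, pc_comp_perm, if_pos h]
    · rw [if_neg (show ¬ (σ ∘ π) b = ν₀ from h), if_neg h, mul_zero]
  exact pc_alt (fun σ => ∑ b : Fin (n + 2), if σ b = ν₀ then pc m.2 (Function.update σ b μ₀) else 0)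
    hG0 hGp σ

lemma pApply_Pi2 (ν₀ μ₀ : Fin (n + 2 + k)) (m : Mfd (n + 2) k)
    (z : Fin (n + 2) → E (n + 2) k) :
    pApply (n + 2) k (Pi2 n k ν₀ μ₀ m).2 z
      = ∑ b : Fin (n + 2),
          pApply (n + 2) k m.2 (Function.update z b (z b ν₀ • (Pi.single μ₀ 1 : E (n + 2) k))) := by
  have hRHS : ∀ b : Fin (n + 2),
      pApply (n + 2) k m.2 (Function.update z b (z b ν₀ • (Pi.single μ₀ 1 : E (n + 2) k)))
        = ∑ σ : Fin (n + 2) → Fin (n + 2 + k),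
            (if σ b = ν₀ then pc m.2 (Function.update σ b μ₀) else 0) * ∏ b', z b' (σ b') := by
    intro b
    rw [pApply_expand]
    have hL : ∀ σ : Fin (n + 2) → Fin (n + 2 + k),
        pc m.2 σ * ∏ b', Function.update z b (z b ν₀ • (Pi.single μ₀ 1 : E (n + 2) k)) b' (σ b')
          = if σ b = μ₀ then pc m.2 σ * (z b ν₀ * ∏ b' ∈ Finset.univ.erase b, z b' (σ b')) else 0 := by
      intro σ
      rw [← Finset.mul_prod_erase Finset.univ _ (Finset.mem_univ b)]
      have h1 : Function.update z b (z b ν₀ • (Pi.single μ₀ 1 : E (n + 2) k)) b (σ b)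
          = if σ b = μ₀ then z b ν₀ else 0 := by
        rw [Function.update_self]
        simp [Pi.single_apply, mul_ite]
      have h2 : ∏ b' ∈ Finset.univ.erase b, Function.update z b (z b ν₀ • (Pi.single μ₀ 1 : E (n + 2) k)) b' (σ b')
          = ∏ b' ∈ Finset.univ.erase b, z b' (σ b') := by
        refine Finset.prod_congr rfl fun b' hb' => ?_
        rw [Function.update_of_ne (Finset.ne_of_mem_erase hb')]
      rw [h1, h2]
      by_cases h : σ b = μ₀
      · rw [if_pos h, if_pos h]
      · rw [if_neg h, if_neg h]; ring
    have hR : ∀ σ : Fin (n + 2) → Fin (n + 2 + k),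
        (if σ b = ν₀ then pc m.2 (Function.update σ b μ₀) else 0) * ∏ b', z b' (σ b')
          = if σ b = ν₀ then pc m.2 (Function.update σ b μ₀)
              * (z b ν₀ * ∏ b' ∈ Finset.univ.erase b, z b' (σ b')) else 0 := by
      intro σ
      by_cases h : σ b = ν₀
      · rw [if_pos h, if_pos h, ← Finset.mul_prod_erase Finset.univ _ (Finset.mem_univ b), h]
      · rw [if_neg h, if_neg h, zero_mul]
    rw [Finset.sum_congr rfl fun σ _ => hL σ, Finset.sum_congr rfl fun σ _ => hR σ,
      ← Finset.sum_filter, ← Finset.sum_filter]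
    refine Finset.sum_nbij' (fun σ => Function.update σ b ν₀) (fun σ => Function.update σ b μ₀)
      ?_ ?_ ?_ ?_ ?_
    · intro σ hσ
      simp only [Finset.mem_filter, Finset.mem_univ, true_and] at hσ ⊢
      exact Function.update_self b ν₀ σ
    · intro σ hσ
      simp only [Finset.mem_filter, Finset.mem_univ, true_and] at hσ ⊢
      exact Function.update_self b μ₀ σ
    · intro σ hσ
      simp only [Finset.mem_filter, Finset.mem_univ, true_and] at hσ
      show Function.update (Function.update σ b ν₀) b μ₀ = σ
      rw [Function.update_idem, ← hσ, Function.update_eq_self]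
    · intro σ hσ
      simp only [Finset.mem_filter, Finset.mem_univ, true_and] at hσ
      show Function.update (Function.update σ b μ₀) b ν₀ = σ
      rw [Function.update_idem, ← hσ, Function.update_eq_self]
    · intro σ hσ
      simp only [Finset.mem_filter, Finset.mem_univ, true_and] at hσ
      show pc m.2 σ * (z b ν₀ * ∏ b' ∈ Finset.univ.erase b, z b' (σ b'))
          = pc m.2 (Function.update (Function.update σ b ν₀) b μ₀)
            * (z b ν₀ * ∏ b' ∈ Finset.univ.erase b, z b' (Function.update σ b ν₀ b'))
      rw [Function.update_idem, ← hσ, Function.update_eq_self]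
      congr 2
      refine Finset.prod_congr rfl fun b' hb' => ?_
      rw [Function.update_of_ne (Finset.ne_of_mem_erase hb')]
  rw [pApply_expand, Finset.sum_congr rfl fun b (_ : b ∈ (Finset.univ : Finset (Fin (n+2)))) => hRHS b,
    Finset.sum_comm]
  refine Finset.sum_congr rfl fun σ _ => ?_
  rw [pc_Pi2, Finset.sum_mul]

end Aux4
section Aux5

lemma removeNth_succ_cons {α : Type*} {m : ℕ} (i : Fin (m + 1)) (a : α) (v : Fin (m + 1) → α) :
    Fin.removeNth (α := fun _ => α) i.succ (Fin.cons a v)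
      = (Fin.cons a (Fin.removeNth (α := fun _ => α) i v) : Fin (m + 1) → α) := by
  funext j
  induction j using Fin.cases with
  | zero =>
      show (Fin.cons a v : Fin (m + 2) → α) (i.succ.succAbove 0) = a
      have h0 : i.succ.succAbove 0 = 0 := by
        rw [Fin.succAbove_of_castSucc_lt]
        · rfl
        · rw [Fin.castSucc_zero]
          exact Fin.succ_pos i
      rw [h0, Fin.cons_zero]
  | succ j =>
      show (Fin.cons a v : Fin (m + 2) → α) (i.succ.succAbove j.succ)
          = (Fin.cons a (Fin.removeNth i v) : Fin (m + 1) → α) j.succ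
      rw [Fin.succ_succAbove_succ i j]
      rw [show ((Fin.cons a v : Fin (m + 2) → α) ((i.succAbove j).succ)) = v (i.succAbove j) from
        Fin.cons_succ (α := fun _ => α) a v (i.succAbove j)]
      rw [show ((Fin.cons a (Fin.removeNth i v) : Fin (m + 1) → α) j.succ)
          = Fin.removeNth (α := fun _ => α) i v j from Fin.cons_succ (α := fun _ => α) a (Fin.removeNth (α := fun _ => α) i v) j]
      rfl

lemma update_eq_cons_comp_cycleRange {α : Type*} {m : ℕ} (V : Fin (m + 1) → α)
    (i : Fin (m + 1)) (u : α) :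
    Function.update V i u = (Fin.cons u (Fin.removeNth i V)) ∘ (Fin.cycleRange i) := by
  funext l
  rcases lt_trichotomy l i with h | rfl | h
  · rw [Function.comp_apply, Fin.cycleRange_of_lt h, Function.update_of_ne (ne_of_lt h)]
    have hl : (l : ℕ) < m := lt_of_lt_of_le h (Nat.lt_succ_iff.mp i.isLt)
    have h1 : l + 1 = Fin.succ ⟨(l : ℕ), hl⟩ := by
      ext
      rw [Fin.val_add_one_of_lt (lt_of_lt_of_le h (Fin.le_last i))]
      rfl
    rw [h1, Fin.cons_succ]
    show V l = V (i.succAbove ⟨(l : ℕ), hl⟩)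
    congr 1
    rw [Fin.succAbove_of_castSucc_lt]
    · ext; rfl
    · show (⟨(l : ℕ), hl⟩ : Fin m).castSucc < i
      rw [Fin.lt_def]
      exact h
  · rw [Function.comp_apply, Fin.cycleRange_self, Function.update_self]
    rfl
  · rw [Function.comp_apply, Fin.cycleRange_of_gt h, Function.update_of_ne (ne_of_gt h)]
    have h0 : l ≠ 0 := by
      intro hc
      rw [hc] at h
      exact absurd h (by simp [Fin.not_lt, Fin.zero_le])
    have h1 : V l = V ((l.pred h0).succ) := by rw [Fin.succ_pred]
    rw [h1]
    conv_rhs => rw [show l = (l.pred h0).succ from (Fin.succ_pred l h0).symm]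
    rw [Fin.cons_succ]
    show V ((l.pred h0).succ) = V (i.succAbove (l.pred h0))
    congr 1
    rw [Fin.succAbove_of_le_castSucc]
    rw [Fin.le_def]
    show (i : ℕ) ≤ ((l : ℕ) - 1)
    exact Nat.le_sub_one_of_lt h

variable {d e : ℕ}

lemma pApply_update_cyc (p : Psp (d + 1) e) (V : Fin (d + 1) → E (d + 1) e)
    (i : Fin (d + 1)) (u : E (d + 1) e) :
    pApply (d + 1) e p (Function.update V i u)
      = (-1 : ℝ) ^ (i : ℕ) * pApply (d + 1) e p (Fin.cons u (Fin.removeNth i V)) := by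
  rw [update_eq_cons_comp_cycleRange, pApply_comp_perm, Fin.sign_cycleRange]
  norm_num

lemma cons_cons_swap {α : Type*} {m : ℕ} (a b : α) (w : Fin m → α) :
    Fin.cons b (Fin.cons a w) = (Fin.cons a (Fin.cons b w)) ∘ (Equiv.swap (0 : Fin (m + 2)) 1) := by
  funext l
  induction l using Fin.cases with
  | zero =>
      rw [Function.comp_apply, Equiv.swap_apply_left, Fin.cons_zero,
        show (1 : Fin (m + 2)) = (0 : Fin (m + 1)).succ from rfl, Fin.cons_succ, Fin.cons_zero]
  | succ j =>
      induction j using Fin.cases with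
      | zero =>
          rw [Function.comp_apply, show ((0 : Fin (m+1)).succ) = (1 : Fin (m + 2)) from rfl,
            Equiv.swap_apply_right, Fin.cons_zero,
            show (1 : Fin (m + 2)) = (0 : Fin (m + 1)).succ from rfl, Fin.cons_succ, Fin.cons_zero]
      | succ j' =>
          have hne0 : j'.succ.succ ≠ (0 : Fin (m + 2)) := Fin.succ_ne_zero _
          have hne1 : j'.succ.succ ≠ (1 : Fin (m + 2)) := by
            rw [show (1 : Fin (m + 2)) = (0 : Fin (m + 1)).succ from rfl]
            intro hc
            exact Fin.succ_ne_zero j' (Fin.succ_injective _ hc)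
          rw [Function.comp_apply, Equiv.swap_apply_of_ne_of_ne hne0 hne1,
            Fin.cons_succ, Fin.cons_succ, Fin.cons_succ, Fin.cons_succ]

lemma pApply_swap01 (p : Psp (d + 2) e) (a b : E (d + 2) e) (w : Fin d → E (d + 2) e) :
    pApply (d + 2) e p (Fin.cons b (Fin.cons a w))
      = - pApply (d + 2) e p (Fin.cons a (Fin.cons b w)) := by
  rw [cons_cons_swap, pApply_comp_perm, Equiv.Perm.sign_swap (Fin.ne_of_val_ne (by norm_num) : (0 : Fin (d+2)) ≠ 1)]
  norm_num

lemma pApply_cons_update' (p : Psp (d + 2) e) (a u : E (d + 2) e)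
    (w : Fin (d + 1) → E (d + 2) e) (j : Fin (d + 1)) :
    pApply (d + 2) e p (Fin.cons a (Function.update w j u))
      = (-1 : ℝ) ^ ((j : ℕ) + 1)
        * pApply (d + 2) e p (Fin.cons u (Fin.cons a (Fin.removeNth j w))) := by
  rw [Fin.cons_update, pApply_update_cyc p (Fin.cons a w) j.succ u, removeNth_succ_cons]
  rw [Fin.val_succ]

lemma pApply_cons_update (p : Psp (d + 2) e) (a u : E (d + 2) e)
    (w : Fin (d + 1) → E (d + 2) e) (j : Fin (d + 1)) :
    pApply (d + 2) e p (Fin.cons a (Function.update w j u))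
      = (-1 : ℝ) ^ (j : ℕ)
        * pApply (d + 2) e p (Fin.cons a (Fin.cons u (Fin.removeNth j w))) := by
  rw [pApply_cons_update', pApply_swap01 p u a (Fin.removeNth j w)]
  ring

end Aux5
section Aux6

variable {d e : ℕ}

lemma pApply_neg_p (p : Psp d e) (z : Fin d → E d e) :
    pApply d e (-p) z = - pApply d e p z := map_neg (pApplyLM z) p

lemma pApply_sub_p (p q : Psp d e) (z : Fin d → E d e) :
    pApply d e (p - q) z = pApply d e p z - pApply d e q z := map_sub (pApplyLM z) p q

lemma pApply_smul_p (c : ℝ) (p : Psp d e) (z : Fin d → E d e) :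
    pApply d e (c • p) z = c * pApply d e p z := map_smul (pApplyLM z) c p

lemma pApply_sum_p {ι : Type*} (s : Finset ι) (p : ι → Psp d e) (z : Fin d → E d e) :
    pApply d e (∑ i ∈ s, p i) z = ∑ i ∈ s, pApply d e (p i) z := map_sum (pApplyLM z) p s

lemma fderiv_coord {ξ : E d e → E d e} (hξ : ContDiff ℝ (⊤ : ℕ∞) ξ) (q : E d e)
    (μ₀ : Fin (d + e)) (w : E d e) :
    fderiv ℝ (fun q' => ξ q' μ₀) q w = fderiv ℝ ξ q w μ₀ := by
  have h2 := (ContinuousLinearMap.proj (R := ℝ) (φ := fun _ : Fin (d + e) => ℝ)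
      μ₀).hasFDerivAt.comp q (hξ.differentiable (by simp) q).hasFDerivAt
  have h : HasFDerivAt (fun q' => ξ q' μ₀)
      ((ContinuousLinearMap.proj μ₀).comp (fderiv ℝ ξ q)) q := by
    exact h2
  rw [h.fderiv]
  rfl

lemma fderiv_vec {ξ : E d e → E d e} (q : E d e) (w : E d e) :
    fderiv ℝ ξ q w = ∑ ν₀, w ν₀ • fderiv ℝ ξ q (Pi.single ν₀ 1) := by
  have h : w = ∑ ν₀, w ν₀ • (Pi.single ν₀ 1 : E d e) := by
    conv_lhs => rw [← Finset.univ_sum_single w]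
    refine Finset.sum_congr rfl fun t _ => ?_
    ext s
    simp [Pi.single_apply]
  conv_lhs => rw [h]
  rw [map_sum]
  refine Finset.sum_congr rfl fun ν₀ _ => ?_
  exact (fderiv ℝ ξ q).map_smul _ _

end Aux6

section Aux7

variable {n k : ℕ}

lemma sum_dxi {ξ : E (n + 2) k → E (n + 2) k} (hξ : ContDiff ℝ (⊤ : ℕ∞) ξ) (q : E (n + 2) k)
    (p : Psp (n + 2) k) (z : Fin (n + 2) → E (n + 2) k) (b : Fin (n + 2)) :
    ∑ μ₀ : Fin (n + 2 + k), ∑ ν₀ : Fin (n + 2 + k),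
        fderiv ℝ (fun q' => ξ q' μ₀) q (Pi.single ν₀ 1)
          * pApply (n + 2) k p (Function.update z b (z b ν₀ • (Pi.single μ₀ 1 : E (n + 2) k)))
      = pApply (n + 2) k p (Function.update z b (fderiv ℝ ξ q (z b))) := by
  rw [pApply_update_vec]
  refine Finset.sum_congr rfl fun μ₀ _ => ?_
  have hcoef : fderiv ℝ ξ q (z b) μ₀
      = ∑ ν₀, z b ν₀ * fderiv ℝ ξ q (Pi.single ν₀ 1) μ₀ := by
    rw [fderiv_vec q (z b)]
    rw [Finset.sum_apply]
    refine Finset.sum_congr rfl fun ν₀ _ => ?_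
    rfl
  rw [hcoef, Finset.sum_mul]
  refine Finset.sum_congr rfl fun ν₀ _ => ?_
  rw [pApply_update_smul, fderiv_coord hξ]
  ring

lemma XiP_fst (ξ : E (n + 2) k → E (n + 2) k) (x : Mfd (n + 2) k) :
    (XiP n k ξ x).1 = ξ x.1 := by
  show ((ξ x.1, (0 : Psp (n + 2) k)) - ∑ μ₀ : Fin (n + 2 + k), ∑ ν₀ : Fin (n + 2 + k),
      fderiv ℝ (fun q => ξ q μ₀) x.1 (Pi.single ν₀ 1) • Pi2 n k ν₀ μ₀ x).1 = ξ x.1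
  rw [Prod.fst_sub, Prod.fst_sum]
  have h : ∀ μ₀ ∈ (Finset.univ : Finset (Fin (n + 2 + k))),
      (∑ ν₀ : Fin (n + 2 + k),
        fderiv ℝ (fun q => ξ q μ₀) x.1 (Pi.single ν₀ 1) • Pi2 n k ν₀ μ₀ x).1 = 0 := by
    intro μ₀ _
    rw [Prod.fst_sum]
    refine Finset.sum_eq_zero fun ν₀ _ => ?_
    show fderiv ℝ (fun q => ξ q μ₀) x.1 (Pi.single ν₀ 1) • (Pi2 n k ν₀ μ₀ x).1 = 0
    rw [show (Pi2 n k ν₀ μ₀ x).1 = 0 from rfl, smul_zero]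
  rw [Finset.sum_congr rfl h, Finset.sum_const_zero, sub_zero]

lemma pApply_XiP_snd {ξ : E (n + 2) k → E (n + 2) k} (hξ : ContDiff ℝ (⊤ : ℕ∞) ξ)
    (x : Mfd (n + 2) k) (z : Fin (n + 2) → E (n + 2) k) :
    pApply (n + 2) k (XiP n k ξ x).2 z
      = - ∑ b : Fin (n + 2),
          pApply (n + 2) k x.2 (Function.update z b (fderiv ℝ ξ x.1 (z b))) := by
  have hsnd : (XiP n k ξ x).2
      = (0 : Psp (n + 2) k) - ∑ μ₀ : Fin (n + 2 + k), ∑ ν₀ : Fin (n + 2 + k),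
          fderiv ℝ (fun q => ξ q μ₀) x.1 (Pi.single ν₀ 1) • (Pi2 n k ν₀ μ₀ x).2 := by
    show ((ξ x.1, (0 : Psp (n + 2) k)) - ∑ μ₀ : Fin (n + 2 + k), ∑ ν₀ : Fin (n + 2 + k),
        fderiv ℝ (fun q => ξ q μ₀) x.1 (Pi.single ν₀ 1) • Pi2 n k ν₀ μ₀ x).2 = _
    rw [Prod.snd_sub, Prod.snd_sum]
    congr 1
    refine Finset.sum_congr rfl fun μ₀ _ => ?_
    rw [Prod.snd_sum]
    exact Finset.sum_congr rfl fun ν₀ _ => rfl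
  rw [hsnd, pApply_sub_p, pApply_sum_p]
  rw [show pApply (n + 2) k (0 : Psp (n + 2) k) z = 0 from map_zero (pApplyLM z), zero_sub]
  congr 1
  have hL : ∀ μ₀ : Fin (n + 2 + k),
      pApply (n + 2) k (∑ ν₀ : Fin (n + 2 + k),
          fderiv ℝ (fun q => ξ q μ₀) x.1 (Pi.single ν₀ 1) • (Pi2 n k ν₀ μ₀ x).2) z
        = ∑ ν₀ : Fin (n + 2 + k), ∑ b : Fin (n + 2),
            fderiv ℝ (fun q' => ξ q' μ₀) x.1 (Pi.single ν₀ 1)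
              * pApply (n + 2) k x.2
                  (Function.update z b (z b ν₀ • (Pi.single μ₀ 1 : E (n + 2) k))) := by
    intro μ₀
    rw [pApply_sum_p]
    refine Finset.sum_congr rfl fun ν₀ _ => ?_
    rw [pApply_smul_p, pApply_Pi2, Finset.mul_sum]
  rw [Finset.sum_congr rfl fun μ₀ (_ : μ₀ ∈ (Finset.univ : Finset (Fin (n + 2 + k)))) => hL μ₀]
  rw [Finset.sum_congr rfl fun μ₀ (_ : μ₀ ∈ (Finset.univ : Finset (Fin (n + 2 + k)))) =>
    Finset.sum_comm]
  rw [Finset.sum_comm]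
  refine Finset.sum_congr rfl fun b _ => ?_
  exact sum_dxi hξ x.1 x.2 z b

end Aux7
section Aux8

variable {d e : ℕ}

lemma pc_def (p : Psp d e) (σ : Fin d → Fin (d + e)) :
    pApply d e p (fun a => (Pi.single (σ a) 1 : E d e)) = pc p σ := rfl

lemma prod_cons_cons {m : ℕ} (a b : E d e) (c : Fin m → E d e) (σ : Fin (m + 2) → Fin (d + e)) :
    ∏ b', (Fin.cons a (Fin.cons b c) : Fin (m + 2) → E d e) b' (σ b')
      = a (σ 0) * (b (σ 1) * ∏ j : Fin m, c j (σ j.succ.succ)) := by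
  rw [Fin.prod_univ_succ, Fin.prod_univ_succ]
  simp only [Fin.cons_zero, Fin.cons_succ]
  rfl

lemma fderiv_theta2 {n k : ℕ} {ξ ξ' : E (n + 2) k → E (n + 2) k}
    (hξ : ContDiff ℝ (⊤ : ℕ∞) ξ) (hξ' : ContDiff ℝ (⊤ : ℕ∞) ξ')
    (c : Fin n → E (n + 2) k) (x u : Mfd (n + 2) k) :
    fderiv ℝ (fun y : Mfd (n + 2) k =>
        pApply (n + 2) k y.2 (Fin.cons (ξ y.1) (Fin.cons (ξ' y.1) c))) x u
      = pApply (n + 2) k u.2 (Fin.cons (ξ x.1) (Fin.cons (ξ' x.1) c))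
        + pApply (n + 2) k x.2 (Fin.cons (fderiv ℝ ξ x.1 u.1) (Fin.cons (ξ' x.1) c))
        + pApply (n + 2) k x.2 (Fin.cons (ξ x.1) (Fin.cons (fderiv ℝ ξ' x.1 u.1) c)) := by
  classical
  set F1 : Mfd (n + 2) k →L[ℝ] E (n + 2) k :=
    ContinuousLinearMap.fst ℝ (E (n + 2) k) (Psp (n + 2) k) with hF1
  have hx : HasFDerivAt (fun y : Mfd (n + 2) k => ξ y.1) ((fderiv ℝ ξ x.1).comp F1) x := by
    have h := ((hξ.differentiable (by simp) x.1).hasFDerivAt).comp x F1.hasFDerivAt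
    simpa [Function.comp] using h
  have hx' : HasFDerivAt (fun y : Mfd (n + 2) k => ξ' y.1) ((fderiv ℝ ξ' x.1).comp F1) x := by
    have h := ((hξ'.differentiable (by simp) x.1).hasFDerivAt).comp x F1.hasFDerivAt
    simpa [Function.comp] using h
  have h2 : ∀ t : Fin (n + 2 + k), HasFDerivAt (fun y : Mfd (n + 2) k => ξ y.1 t)
      ((ContinuousLinearMap.proj t).comp ((fderiv ℝ ξ x.1).comp F1)) x := by
    intro t
    have h := (ContinuousLinearMap.proj (R := ℝ) (φ := fun _ : Fin (n + 2 + k) => ℝ)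
      t).hasFDerivAt.comp x hx
    exact h
  have h3 : ∀ t : Fin (n + 2 + k), HasFDerivAt (fun y : Mfd (n + 2) k => ξ' y.1 t)
      ((ContinuousLinearMap.proj t).comp ((fderiv ℝ ξ' x.1).comp F1)) x := by
    intro t
    have h := (ContinuousLinearMap.proj (R := ℝ) (φ := fun _ : Fin (n + 2 + k) => ℝ)
      t).hasFDerivAt.comp x hx'
    exact h
  have h1 : ∀ σ : Fin (n + 2) → Fin (n + 2 + k),
      HasFDerivAt (fun y : Mfd (n + 2) k => pc y.2 σ)
        ((pApplyCLM (fun a => (Pi.single (σ a) 1 : E (n + 2) k))).comp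
          (ContinuousLinearMap.snd ℝ (E (n + 2) k) (Psp (n + 2) k))) x :=
    fun σ => hasFDerivAt_pApply_snd _ x
  have hfun : (fun y : Mfd (n + 2) k =>
      pApply (n + 2) k y.2 (Fin.cons (ξ y.1) (Fin.cons (ξ' y.1) c)))
      = fun y => ∑ σ : Fin (n + 2) → Fin (n + 2 + k),
          (pc y.2 σ * (ξ y.1 (σ 0) * ξ' y.1 (σ 1)))
            * (∏ j : Fin n, c j (σ j.succ.succ)) := by
    funext y
    rw [pApply_expand]
    refine Finset.sum_congr rfl fun σ _ => ?_
    rw [prod_cons_cons]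
    ring
  rw [hfun]
  have hterm : ∀ σ ∈ (Finset.univ : Finset (Fin (n + 2) → Fin (n + 2 + k))), HasFDerivAt
      (fun y : Mfd (n + 2) k => (pc y.2 σ * (ξ y.1 (σ 0) * ξ' y.1 (σ 1)))
        * (∏ j : Fin n, c j (σ j.succ.succ)))
      ((∏ j : Fin n, c j (σ j.succ.succ)) •
        (pc x.2 σ • (ξ x.1 (σ 0) •
            ((ContinuousLinearMap.proj (σ 1)).comp ((fderiv ℝ ξ' x.1).comp F1))
          + ξ' x.1 (σ 1) •
            ((ContinuousLinearMap.proj (σ 0)).comp ((fderiv ℝ ξ x.1).comp F1)))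
        + (ξ x.1 (σ 0) * ξ' x.1 (σ 1)) •
            ((pApplyCLM (fun a => (Pi.single (σ a) 1 : E (n + 2) k))).comp
              (ContinuousLinearMap.snd ℝ (E (n + 2) k) (Psp (n + 2) k))))) x := by
    intro σ _
    exact ((h1 σ).mul ((h2 (σ 0)).mul (h3 (σ 1)))).mul_const _
  rw [(HasFDerivAt.fun_sum hterm).fderiv, ContinuousLinearMap.sum_apply]
  rw [pApply_expand u.2 (Fin.cons (ξ x.1) (Fin.cons (ξ' x.1) c)),
    pApply_expand x.2 (Fin.cons (fderiv ℝ ξ x.1 u.1) (Fin.cons (ξ' x.1) c)),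
    pApply_expand x.2 (Fin.cons (ξ x.1) (Fin.cons (fderiv ℝ ξ' x.1 u.1) c))]
  rw [← Finset.sum_add_distrib, ← Finset.sum_add_distrib]
  refine Finset.sum_congr rfl fun σ _ => ?_
  rw [prod_cons_cons, prod_cons_cons, prod_cons_cons]
  simp only [ContinuousLinearMap.smul_apply, ContinuousLinearMap.add_apply,
    ContinuousLinearMap.coe_comp', Function.comp_apply, ContinuousLinearMap.coe_snd',
    ContinuousLinearMap.coe_fst', ContinuousLinearMap.proj_apply, smul_eq_mul,
    pApplyCLM_apply, pc_def, hF1]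
  ring

end Aux8
section Aux9

variable {d e : ℕ}

lemma pApply_update_sub (p : Psp d e) (z : Fin d → E d e) (b : Fin d) (u v : E d e) :
    pApply d e p (Function.update z b (u - v))
      = pApply d e p (Function.update z b u) - pApply d e p (Function.update z b v) := by
  have h : u - v = u + (-1 : ℝ) • v := by
    rw [neg_one_smul]
    abel
  rw [h, pApply_update_add, pApply_update_smul]
  ring

lemma pApply_single (μ : Idx d e) (z : Fin d → E d e) :
    pApply d e (Pi.single μ 1) z = Matrix.det (Matrix.of fun a b => z b (μ.1 a)) := by
  unfold pApply
  rw [Finset.sum_eq_single μ]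
  · rw [Pi.single_eq_same, one_mul]
  · intro ν _ hν
    rw [Pi.single_eq_of_ne hν, zero_mul]
  · intro h
    exact absurd (Finset.mem_univ μ) h

lemma pApply_cons_col_sum (p : Psp (d + 1) e) (q : E (d + 1) e) (w : Fin d → E (d + 1) e) :
    pApply (d + 1) e p (Fin.cons q w)
      = ∑ t : Fin (d + 1 + e), q t * pApply (d + 1) e p (Fin.cons (Pi.single t 1) w) := by
  conv_lhs => rw [show (Fin.cons q w : Fin (d + 1) → E (d + 1) e)
    = Function.update (Fin.cons q w) 0 q from (Fin.update_cons_zero (α := fun _ => E (d + 1) e) q w q).symm]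
  rw [pApply_update_vec]
  refine Finset.sum_congr rfl fun t _ => ?_
  rw [show Function.update (Fin.cons q w : Fin (d + 1) → E (d + 1) e) 0 (Pi.single t 1)
    = Fin.cons (Pi.single t 1) w from Fin.update_cons_zero (α := fun _ => E (d + 1) e) q w (Pi.single t 1)]

lemma cons_fst {m n k : ℕ} (A : Mfd n k) (w : Fin m → Mfd n k) :
    (fun l => ((Fin.cons A w : Fin (m + 1) → Mfd n k) l).1)
      = (Fin.cons A.1 (fun l => (w l).1) : Fin (m + 1) → E n k) := by
  funext l
  induction l using Fin.cases with
  | zero => rfl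
  | succ j => simp [Fin.cons_succ]

end Aux9
section Aux10

variable {n k : ℕ}

lemma Omega_cons_cons (x A B : Mfd (n + 2) k) (v : Fin (n + 1) → Mfd (n + 2) k) :
    Omega (n + 2) k x (Fin.cons A (Fin.cons B v))
      = pApply (n + 2) k A.2 (Fin.cons B.1 (fun j => (v j).1))
        - pApply (n + 2) k B.2 (Fin.cons A.1 (fun j => (v j).1))
        + ∑ j : Fin (n + 1), (-1 : ℝ) ^ (j : ℕ) * pApply (n + 2) k (v j).2
            (Fin.cons A.1 (Fin.cons B.1 (fun l => (v (j.succAbove l)).1))) := by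
  rw [Omega_eval, Fin.sum_univ_succ, Fin.sum_univ_succ]
  have h0 : (fun j => ((Fin.removeNth (α := fun _ => Mfd (n + 2) k) 0
        (Fin.cons A (Fin.cons B v))) j).1)
      = (Fin.cons B.1 (fun j => (v j).1) : Fin (n + 2) → E (n + 2) k) := by
    rw [show Fin.removeNth (α := fun _ => Mfd (n + 2) k) 0 (Fin.cons A (Fin.cons B v))
      = Fin.cons B v by rw [Fin.removeNth_zero]; exact Fin.tail_cons (α := fun _ => Mfd (n + 2) k) A (Fin.cons B v)]
    exact cons_fst B v
  have h1 : (fun j => ((Fin.removeNth (α := fun _ => Mfd (n + 2) k) ((0 : Fin (n + 2)).succ)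
        (Fin.cons A (Fin.cons B v))) j).1)
      = (Fin.cons A.1 (fun j => (v j).1) : Fin (n + 2) → E (n + 2) k) := by
    rw [removeNth_succ_cons (0 : Fin (n + 2)) A (Fin.cons B v)]
    rw [show Fin.removeNth (α := fun _ => Mfd (n + 2) k) 0 (Fin.cons B v) = v by
      rw [Fin.removeNth_zero]; exact Fin.tail_cons (α := fun _ => Mfd (n + 2) k) B v]
    exact cons_fst A v
  have h2 : ∀ j : Fin (n + 1), (fun l => ((Fin.removeNth (α := fun _ => Mfd (n + 2) k)
        (j.succ.succ) (Fin.cons A (Fin.cons B v))) l).1)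
      = (Fin.cons A.1 (Fin.cons B.1 (fun l => (v (j.succAbove l)).1)) :
          Fin (n + 2) → E (n + 2) k) := by
    intro j
    rw [removeNth_succ_cons j.succ A (Fin.cons B v), removeNth_succ_cons j B v]
    rw [cons_fst A (Fin.cons B (Fin.removeNth j v))]
    rw [cons_fst B (Fin.removeNth (α := fun _ => Mfd (n + 2) k) j v)]
    rfl
  rw [h0, h1]
  rw [Finset.sum_congr rfl fun (j : Fin (n + 1)) (_ : j ∈ Finset.univ) => by rw [h2 j]]
  simp only [Fin.cons_zero, Fin.cons_succ, Fin.val_zero, pow_zero, one_mul, Fin.val_succ,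
    Fin.val_zero]
  rw [pow_one]
  have hs : ∀ j : Fin (n + 1), (-1 : ℝ) ^ ((j : ℕ) + 1 + 1) = (-1 : ℝ) ^ (j : ℕ) := by
    intro j
    rw [pow_succ, pow_succ]
    ring
  rw [Finset.sum_congr rfl fun (j : Fin (n + 1)) (_ : j ∈ Finset.univ) => by rw [hs j]]
  ring

end Aux10

set_option maxHeartbeats 2000000

/-- (Proposition 1.) The 𝔭-brackets of generalized positions and momenta:
`{Q^ζ, Q^ζ̃} = 0`, `{P_ξ, P_ξ̃} = P_{[ξ,ξ̃]} + d(ξ̃⌟ξ⌟θ)`, and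
`{P_ξ, Q^ζ} = Σ_{μ₁<…} Σ_α Σ_μ (−1)^{α+1} ξ^μ (∂ζ_{μ₁…μ̂_α…}/∂q^{μ_α})
(∂/∂q^μ)⌟(dq^{μ₁}∧…∧dq^{μ_{n+2}})`. -/
theorem pBrackets_of_positions_and_momenta
    (n k : ℕ)
    (ζ ζ' : IdxQ n k → E (n + 2) k → ℝ)
    (hζ : ∀ ρ, ContDiff ℝ (⊤ : ℕ∞) (ζ ρ)) (hζ' : ∀ ρ, ContDiff ℝ (⊤ : ℕ∞) (ζ' ρ))
    (ξ ξ' : E (n + 2) k → E (n + 2) k)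
    (hξ : ContDiff ℝ (⊤ : ℕ∞) ξ) (hξ' : ContDiff ℝ (⊤ : ℕ∞) ξ') :
    -- (i) `{Q^ζ, Q^ζ'} = 0`:
    (∀ (x : Mfd (n + 2) k) (v : Fin (n + 1) → Mfd (n + 2) k),
      iota (XiQ n k ζ') (iota (XiQ n k ζ) (Omega (n + 2) k)) x v = 0)
    ∧
    -- (ii) `{P_ξ, P_ξ'} = P_{[ξ,ξ']} + d(ξ'⌟ξ⌟θ)`:
    (∀ (x : Mfd (n + 2) k) (v : Fin (n + 1) → Mfd (n + 2) k),
      iota (XiP n k ξ') (iota (XiP n k ξ) (Omega (n + 2) k)) x v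
        = Pform n k (lieBE n k ξ ξ') x v
          + extD (fun y (w : Fin n → Mfd (n + 2) k) =>
              theta (n + 2) k y
                (Fin.cons ((ξ y.1, 0) : Mfd (n + 2) k)
                  (Fin.cons ((ξ' y.1, 0) : Mfd (n + 2) k) w))) x v)
    ∧
    -- (iii) `{P_ξ, Q^ζ}` explicitly:
    (∀ (x : Mfd (n + 2) k) (v : Fin (n + 1) → Mfd (n + 2) k),
      iota (XiQ n k ζ) (iota (XiP n k ξ) (Omega (n + 2) k)) x v
        = ∑ μ : Idx (n + 2) k, ∑ α : Fin (n + 2), ∑ μ₀ : Fin (n + 2 + k),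
            (-1 : ℝ) ^ (α : ℕ) * ξ x.1 μ₀ *
              fderiv ℝ (ζ (removeIdx n k μ α)) x.1 (Pi.single (μ.1 α) 1) *
              Matrix.det (Matrix.of fun a b =>
                (Fin.cons (Pi.single μ₀ (1:ℝ)) (fun j => (v j).1) :
                    Fin (n + 2) → E (n + 2) k) b (μ.1 a))) := by
  refine ⟨?_, ?_, ?_⟩
  · -- (i)
    intro x v
    show Omega (n + 2) k x (Fin.cons (XiQ n k ζ x) (Fin.cons (XiQ n k ζ' x) v)) = 0
    rw [Omega_eval]
    refine Finset.sum_eq_zero fun i _ => ?_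
    have hcol : ((Fin.removeNth (α := fun _ => Mfd (n + 2) k) i
        (Fin.cons (XiQ n k ζ x) (Fin.cons (XiQ n k ζ' x) v))) 0).1 = 0 := by
      show ((Fin.cons (XiQ n k ζ x) (Fin.cons (XiQ n k ζ' x) v) :
          Fin (n + 3) → Mfd (n + 2) k) (i.succAbove 0)).1 = 0
      rcases eq_or_ne i 0 with rfl | hi
      · rw [Fin.zero_succAbove, Fin.cons_succ, Fin.cons_zero]
        rfl
      · rw [Fin.succAbove_ne_zero_zero hi, Fin.cons_zero]
        rfl
    rw [pApply_zero_col _ _ 0 hcol, mul_zero]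
  · -- (ii)
    intro x v
    show Omega (n + 2) k x (Fin.cons (XiP n k ξ x) (Fin.cons (XiP n k ξ' x) v)) = _
    have hT : ∀ (a : E (n + 2) k) (D : E (n + 2) k →L[ℝ] E (n + 2) k),
        (∑ b : Fin (n + 2), pApply (n + 2) k x.2
            (Function.update (Fin.cons a (fun j => (v j).1)) b
              (D ((Fin.cons a (fun j => (v j).1) : Fin (n + 2) → E (n + 2) k) b))))
          = pApply (n + 2) k x.2 (Fin.cons (D a) (fun j => (v j).1))
            + ∑ j : Fin (n + 1), pApply (n + 2) k x.2
                (Fin.cons a (Function.update (fun l => (v l).1) j (D ((v j).1)))) := by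
      intro a D
      rw [Fin.sum_univ_succ]
      congr 1
      · rw [show ((Fin.cons a (fun j => (v j).1) : Fin (n + 2) → E (n + 2) k) 0) = a from
          Fin.cons_zero (α := fun _ => E (n + 2) k) a (fun j => (v j).1)]
        rw [show Function.update
            (Fin.cons a (fun j => (v j).1) : Fin (n + 2) → E (n + 2) k) 0 (D a)
          = Fin.cons (D a) (fun j => (v j).1) from
          Fin.update_cons_zero (α := fun _ => E (n + 2) k) a (fun j => (v j).1) (D a)]
      · refine Finset.sum_congr rfl fun j _ => ?_
        rw [show ((Fin.cons a (fun l => (v l).1) : Fin (n + 2) → E (n + 2) k) j.succ)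
          = (v j).1 from Fin.cons_succ (α := fun _ => E (n + 2) k) a (fun l => (v l).1) j]
        rw [show Function.update
            (Fin.cons a (fun l => (v l).1) : Fin (n + 2) → E (n + 2) k) j.succ (D ((v j).1))
          = Fin.cons a (Function.update (fun l => (v l).1) j (D ((v j).1))) from
          (Fin.cons_update (α := fun _ => E (n + 2) k) a (fun l => (v l).1) j
            (D ((v j).1))).symm]
    have hPf : Pform n k (lieBE n k ξ ξ') x v
        = pApply (n + 2) k x.2 (Fin.cons (fderiv ℝ ξ' x.1 (ξ x.1)) (fun j => (v j).1))
          - pApply (n + 2) k x.2 (Fin.cons (fderiv ℝ ξ x.1 (ξ' x.1)) (fun j => (v j).1)) := by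
      show pApply (n + 2) k x.2 (fun i =>
          ((Fin.cons ((lieBE n k ξ ξ' x.1, 0) : Mfd (n + 2) k) v :
            Fin (n + 2) → Mfd (n + 2) k) i).1) = _
      rw [cons_fst]
      rw [show (((lieBE n k ξ ξ' x.1, 0) : Mfd (n + 2) k)).1
        = fderiv ℝ ξ' x.1 (ξ x.1) - fderiv ℝ ξ x.1 (ξ' x.1) from rfl]
      rw [show (Fin.cons (fderiv ℝ ξ' x.1 (ξ x.1) - fderiv ℝ ξ x.1 (ξ' x.1))
            (fun j => (v j).1) : Fin (n + 2) → E (n + 2) k)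
          = Function.update (Fin.cons (fderiv ℝ ξ' x.1 (ξ x.1)) (fun j => (v j).1)) 0
            (fderiv ℝ ξ' x.1 (ξ x.1) - fderiv ℝ ξ x.1 (ξ' x.1)) from
        (Fin.update_cons_zero (α := fun _ => E (n + 2) k) _ _ _).symm]
      rw [pApply_update_sub]
      rw [show Function.update
            (Fin.cons (fderiv ℝ ξ' x.1 (ξ x.1)) (fun j => (v j).1) :
              Fin (n + 2) → E (n + 2) k) 0
            (fderiv ℝ ξ' x.1 (ξ x.1))
          = Fin.cons (fderiv ℝ ξ' x.1 (ξ x.1)) (fun j => (v j).1) from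
        Fin.update_cons_zero (α := fun _ => E (n + 2) k) _ _ _]
      rw [show Function.update
            (Fin.cons (fderiv ℝ ξ' x.1 (ξ x.1)) (fun j => (v j).1) :
              Fin (n + 2) → E (n + 2) k) 0
            (fderiv ℝ ξ x.1 (ξ' x.1))
          = Fin.cons (fderiv ℝ ξ x.1 (ξ' x.1)) (fun j => (v j).1) from
        Fin.update_cons_zero (α := fun _ => E (n + 2) k) _ _ _]
    have hE : extD (fun y (w : Fin n → Mfd (n + 2) k) =>
          theta (n + 2) k y
            (Fin.cons ((ξ y.1, 0) : Mfd (n + 2) k)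
              (Fin.cons ((ξ' y.1, 0) : Mfd (n + 2) k) w))) x v
        = ∑ i : Fin (n + 1), (-1 : ℝ) ^ (i : ℕ) *
            (pApply (n + 2) k (v i).2
                (Fin.cons (ξ x.1) (Fin.cons (ξ' x.1) (fun l => (v (i.succAbove l)).1)))
             + pApply (n + 2) k x.2
                (Fin.cons (fderiv ℝ ξ x.1 (v i).1)
                  (Fin.cons (ξ' x.1) (fun l => (v (i.succAbove l)).1)))
             + pApply (n + 2) k x.2
                (Fin.cons (ξ x.1)
                  (Fin.cons (fderiv ℝ ξ' x.1 (v i).1) (fun l => (v (i.succAbove l)).1)))) := by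
      unfold extD
      refine Finset.sum_congr rfl fun i _ => ?_
      congr 1
      have hfn : (fun y => theta (n + 2) k y
            (Fin.cons ((ξ y.1, 0) : Mfd (n + 2) k)
              (Fin.cons ((ξ' y.1, 0) : Mfd (n + 2) k) (Fin.removeNth i v))))
          = fun y => pApply (n + 2) k y.2
              (Fin.cons (ξ y.1) (Fin.cons (ξ' y.1) (fun l => (v (i.succAbove l)).1))) := by
        funext y
        show pApply (n + 2) k y.2 (fun l =>
            ((Fin.cons ((ξ y.1, 0) : Mfd (n + 2) k)
              (Fin.cons ((ξ' y.1, 0) : Mfd (n + 2) k) (Fin.removeNth i v)) :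
                Fin (n + 2) → Mfd (n + 2) k) l).1) = _
        rw [cons_fst ((ξ y.1, 0) : Mfd (n + 2) k)
          (Fin.cons ((ξ' y.1, 0) : Mfd (n + 2) k) (Fin.removeNth i v))]
        rw [cons_fst ((ξ' y.1, 0) : Mfd (n + 2) k) (Fin.removeNth (α := fun _ => Mfd (n + 2) k) i v)]
        rfl
      rw [hfn, fderiv_theta2 hξ hξ' (fun l => (v (i.succAbove l)).1) x (v i)]
    have hM1 : ∀ j : Fin (n + 1),
        pApply (n + 2) k x.2
            (Fin.cons (ξ' x.1) (Function.update (fun l => (v l).1) j (fderiv ℝ ξ x.1 (v j).1)))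
          = (-1 : ℝ) ^ ((j : ℕ) + 1) * pApply (n + 2) k x.2
              (Fin.cons (fderiv ℝ ξ x.1 (v j).1)
                (Fin.cons (ξ' x.1) (fun l => (v (j.succAbove l)).1))) := by
      intro j
      exact pApply_cons_update' x.2 (ξ' x.1) (fderiv ℝ ξ x.1 (v j).1) (fun l => (v l).1) j
    have hM2 : ∀ j : Fin (n + 1),
        pApply (n + 2) k x.2
            (Fin.cons (ξ x.1) (Function.update (fun l => (v l).1) j (fderiv ℝ ξ' x.1 (v j).1)))
          = (-1 : ℝ) ^ (j : ℕ) * pApply (n + 2) k x.2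
              (Fin.cons (ξ x.1)
                (Fin.cons (fderiv ℝ ξ' x.1 (v j).1) (fun l => (v (j.succAbove l)).1))) := by
      intro j
      exact pApply_cons_update x.2 (ξ x.1) (fderiv ℝ ξ' x.1 (v j).1) (fun l => (v l).1) j
    rw [Omega_cons_cons, XiP_fst, XiP_fst]
    rw [pApply_XiP_snd hξ x (Fin.cons (ξ' x.1) (fun j => (v j).1)),
      pApply_XiP_snd hξ' x (Fin.cons (ξ x.1) (fun j => (v j).1))]
    rw [hT (ξ' x.1) (fderiv ℝ ξ x.1), hT (ξ x.1) (fderiv ℝ ξ' x.1)]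
    rw [hPf, hE]
    rw [Finset.sum_congr rfl fun j (_ : j ∈ Finset.univ) => hM1 j,
      Finset.sum_congr rfl fun j (_ : j ∈ Finset.univ) => hM2 j]
    rw [Finset.sum_congr rfl fun (i : Fin (n + 1)) (_ : i ∈ Finset.univ) =>
      (by rw [mul_add, mul_add] : (-1 : ℝ) ^ (i : ℕ) * (_ + _ + _) = _)]
    rw [Finset.sum_add_distrib, Finset.sum_add_distrib]
    have hsen : (∑ j : Fin (n + 1), (-1 : ℝ) ^ ((j : ℕ) + 1) * pApply (n + 2) k x.2
          (Fin.cons (fderiv ℝ ξ x.1 (v j).1)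
            (Fin.cons (ξ' x.1) (fun l => (v (j.succAbove l)).1))))
        = - ∑ j : Fin (n + 1), (-1 : ℝ) ^ (j : ℕ) * pApply (n + 2) k x.2
            (Fin.cons (fderiv ℝ ξ x.1 (v j).1)
              (Fin.cons (ξ' x.1) (fun l => (v (j.succAbove l)).1))) := by
      rw [← Finset.sum_neg_distrib]
      refine Finset.sum_congr rfl fun j _ => ?_
      rw [pow_succ]
      ring
    rw [hsen]
    ring
  · -- (iii)
    intro x v
    show Omega (n + 2) k x (Fin.cons (XiP n k ξ x) (Fin.cons (XiQ n k ζ x) v)) = _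
    rw [Omega_cons_cons]
    rw [show (XiQ n k ζ x).1 = 0 from rfl, XiP_fst]
    rw [pApply_zero_col (XiP n k ξ x).2 _ 0 (Fin.cons_zero _ _)]
    rw [Finset.sum_congr rfl fun (j : Fin (n + 1)) (_ : j ∈ Finset.univ) => by
      rw [pApply_zero_col (v j).2 _ ((0 : Fin (n + 1)).succ)
        (by rw [Fin.cons_succ, Fin.cons_zero]), mul_zero]]
    rw [Finset.sum_const_zero, add_zero, zero_sub]
    have hmain : pApply (n + 2) k (XiQ n k ζ x).2 (Fin.cons (ξ x.1) (fun j => (v j).1))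
        = ∑ μ : Idx (n + 2) k, ∑ α : Fin (n + 2),
            ((-1 : ℝ) ^ ((α : ℕ) + 1)
              * fderiv ℝ (ζ (removeIdx n k μ α)) x.1 (Pi.single (μ.1 α) 1))
              * Matrix.det (Matrix.of fun a b =>
                  (Fin.cons (ξ x.1) (fun j => (v j).1) : Fin (n + 2) → E (n + 2) k) b (μ.1 a)) := by
      unfold pApply
      refine Finset.sum_congr rfl fun μ _ => ?_
      rw [show (XiQ n k ζ x).2 μ = ∑ α : Fin (n + 2), (-1 : ℝ) ^ ((α : ℕ) + 1)
          * fderiv ℝ (ζ (removeIdx n k μ α)) x.1 (Pi.single (μ.1 α) 1) from rfl,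
        Finset.sum_mul]
    rw [hmain]
    have hR : ∀ (μ : Idx (n + 2) k) (α : Fin (n + 2)),
        (∑ μ₀ : Fin (n + 2 + k), (-1 : ℝ) ^ (α : ℕ) * ξ x.1 μ₀
            * fderiv ℝ (ζ (removeIdx n k μ α)) x.1 (Pi.single (μ.1 α) 1)
            * Matrix.det (Matrix.of fun a b =>
                (Fin.cons (Pi.single μ₀ (1:ℝ)) (fun j => (v j).1) :
                  Fin (n + 2) → E (n + 2) k) b (μ.1 a)))
          = -(((-1 : ℝ) ^ ((α : ℕ) + 1)
              * fderiv ℝ (ζ (removeIdx n k μ α)) x.1 (Pi.single (μ.1 α) 1))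
              * Matrix.det (Matrix.of fun a b =>
                  (Fin.cons (ξ x.1) (fun j => (v j).1) :
                    Fin (n + 2) → E (n + 2) k) b (μ.1 a))) := by
      intro μ α
      rw [show Matrix.det (Matrix.of fun a b =>
            (Fin.cons (ξ x.1) (fun j => (v j).1) : Fin (n + 2) → E (n + 2) k) b (μ.1 a))
          = pApply (n + 2) k (Pi.single μ 1) (Fin.cons (ξ x.1) (fun j => (v j).1)) from
          (pApply_single μ _).symm]
      rw [pApply_cons_col_sum, Finset.mul_sum, ← Finset.sum_neg_distrib]
      refine Finset.sum_congr rfl fun μ₀ _ => ?_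
      rw [pApply_single]
      ring
    rw [Finset.sum_congr rfl fun μ (_ : μ ∈ Finset.univ) =>
      Finset.sum_congr rfl fun α (_ : α ∈ Finset.univ) => hR μ α]
    rw [Finset.sum_congr rfl fun μ (_ : μ ∈ Finset.univ) =>
      Finset.sum_neg_distrib _, Finset.sum_neg_distrib]


end Pataplectic

end
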